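/- arXiv:1302.5026 — 3 statements merged into one kernel-verified Lean document; each statement's English description precedes it below -/
import Mathlib

section
/- Let T > 0 and define Θ : ℝ × ℝ³ → ℝ by Θ(t,x) = 2·((T−t)/‖x‖²)^{1/2} = 2√(T−t)/‖x‖. Then for every t < T and every x ≠ 0, the function Θ solves the singular heat equation ∂_t Θ(t,x) + Δ_x (1/Θ(t,·))(x) = 0, where Δ_x denotes the Euclidean Laplacian in the space variable; explicitly, ∂_t Θ(t,x) = −1/(√(T−t)·‖x‖) and Δ_x (y ↦ ‖y‖/(2√(T−t)))(x) = 1/(√(T−t)·‖x‖). -/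
/-! For `x ≠ 0` the first partial derivatives of the norm are `∂ᵢ‖x‖ = xᵢ/‖x‖`, hence
`∂ᵢ²‖x‖ = 1/‖x‖ - xᵢ²/‖x‖³` and `Δ‖x‖ = (n - 1)/‖x‖`. In `ℝ³` this gives
`Δ(1/Θ) = 2/(2√(T-t)‖x‖)`, which is exactly `-∂ₜΘ`. -/

/-- The Euclidean Laplacian on `EuclideanSpace ℝ (Fin n)`: the sum of second partial
derivatives with respect to the standard orthonormal basis. -/
noncomputable def euclideanLaplacian {n : ℕ} (f : EuclideanSpace ℝ (Fin n) → ℝ)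
    (x : EuclideanSpace ℝ (Fin n)) : ℝ :=
  ∑ i : Fin n,
    fderiv ℝ (fun y => fderiv ℝ f y (EuclideanSpace.single i 1)) x (EuclideanSpace.single i 1)

section InnerProductSpace

variable {F : Type*} [NormedAddCommGroup F] [InnerProductSpace ℝ F]

theorem hasFDerivAt_norm_of_ne_zero {x : F} (hx : x ≠ 0) :
    HasFDerivAt (‖·‖) (‖x‖⁻¹ • innerSL ℝ x) x := by
  have hsqrt : HasDerivAt Real.sqrt (1 / (2 * √(‖x‖ ^ 2))) (‖x‖ ^ 2) :=
    Real.hasDerivAt_sqrt (by positivity)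
  have h := hsqrt.comp_hasFDerivAt x (hasStrictFDerivAt_norm_sq x).hasFDerivAt
  simp only [Function.comp_def, Real.sqrt_sq (norm_nonneg _)] at h
  refine h.congr_fderiv ?_
  ext v
  simp only [one_div, mul_inv_rev, smul_apply, coe_innerSL_apply, nsmul_eq_mul, Nat.cast_ofNat,
    smul_eq_mul]
  field_simp

theorem hasFDerivAt_norm_inv_of_ne_zero {x : F} (hx : x ≠ 0) :
    HasFDerivAt (fun y : F => ‖y‖⁻¹) (-(‖x‖ ^ 3)⁻¹ • innerSL ℝ x) x := by
  refine ((hasDerivAt_inv (norm_ne_zero_iff.2 hx)).comp_hasFDerivAt x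
    (hasFDerivAt_norm_of_ne_zero hx)).congr_fderiv ?_
  rw [smul_smul]
  congr 1
  ring

theorem fderiv_norm_apply_of_ne_zero {x : F} (hx : x ≠ 0) (v : F) :
    fderiv ℝ (‖·‖) x v = inner ℝ x v / ‖x‖ := by
  simp [(hasFDerivAt_norm_of_ne_zero hx).fderiv, div_eq_inv_mul]

end InnerProductSpace

theorem fderiv_const_mul_field_apply {E : Type*} [NormedAddCommGroup E] [NormedSpace ℝ E]
    (g : E → ℝ) (a : ℝ) (x v : E) :
    fderiv ℝ (fun y => a * g y) x v = a * fderiv ℝ g x v := by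
  simp [← smul_eq_mul, ← Pi.smul_def, fderiv_const_smul_field]

theorem hasDerivAt_sqrt_const_sub {T t : ℝ} (ht : t < T) :
    HasDerivAt (fun s => √(T - s)) (-(1 / (2 * √(T - t)))) t := by
  have h := (Real.hasDerivAt_sqrt (sub_pos.2 ht).ne').comp t ((hasDerivAt_id' t).const_sub T)
  rwa [mul_neg_one] at h

section EuclideanSpace

variable {n : ℕ}

theorem fderiv_norm_single_of_ne_zero {x : EuclideanSpace ℝ (Fin n)} (hx : x ≠ 0) (i : Fin n) :
    fderiv ℝ (‖·‖) x (EuclideanSpace.single i 1) = x i / ‖x‖ := by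
  simp [fderiv_norm_apply_of_ne_zero hx, EuclideanSpace.inner_single_right]

theorem fderiv_coord_div_norm_single {x : EuclideanSpace ℝ (Fin n)} (hx : x ≠ 0) (i : Fin n) :
    fderiv ℝ (fun y : EuclideanSpace ℝ (Fin n) => y i / ‖y‖) x (EuclideanSpace.single i 1)
      = 1 / ‖x‖ - x i ^ 2 / ‖x‖ ^ 3 := by
  have h : HasFDerivAt (fun y : EuclideanSpace ℝ (Fin n) => y i * ‖y‖⁻¹) _ x :=
    (EuclideanSpace.proj (𝕜 := ℝ) i).hasFDerivAt.mul (hasFDerivAt_norm_inv_of_ne_zero hx)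
  simp only [div_eq_mul_inv, h.fderiv]
  simp only [PiLp.proj_apply, neg_smul, smul_neg, add_apply, neg_apply, smul_apply,
    coe_innerSL_apply, EuclideanSpace.inner_single_right, conj_trivial, one_mul, smul_eq_mul,
    PiLp.single_eq_same, mul_one]
  ring

theorem euclideanLaplacian_norm {x : EuclideanSpace ℝ (Fin n)} (hx : x ≠ 0) :
    euclideanLaplacian (‖·‖) x = (n - 1) / ‖x‖ := by
  have hpartial (i : Fin n) :
      (fun y => fderiv ℝ (‖·‖) y (EuclideanSpace.single i 1))
        =ᶠ[nhds x] fun y : EuclideanSpace ℝ (Fin n) => y i / ‖y‖ := by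
    filter_upwards [isOpen_ne.mem_nhds hx] with y hy
    exact fderiv_norm_single_of_ne_zero hy i
  have hsum : ∑ i : Fin n, x i ^ 2 = ‖x‖ ^ 2 := by
    simp [EuclideanSpace.norm_sq_eq]
  have hx' : ‖x‖ ≠ 0 := norm_ne_zero_iff.2 hx
  calc euclideanLaplacian (‖·‖) x = ∑ i : Fin n, (1 / ‖x‖ - x i ^ 2 / ‖x‖ ^ 3) :=
        Finset.sum_congr rfl fun i _ => by
          rw [(hpartial i).fderiv_eq, fderiv_coord_div_norm_single hx]
    _ = (n - 1) / ‖x‖ := by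
      rw [Finset.sum_sub_distrib, ← Finset.sum_div, ← Finset.sum_div, hsum]
      simp only [Finset.sum_const, Finset.card_univ, Fintype.card_fin, nsmul_eq_mul, mul_one]
      field_simp

theorem euclideanLaplacian_div_const (f : EuclideanSpace ℝ (Fin n) → ℝ) (c : ℝ)
    (x : EuclideanSpace ℝ (Fin n)) :
    euclideanLaplacian (fun y => f y / c) x = euclideanLaplacian f x / c := by
  simp only [euclideanLaplacian, div_eq_inv_mul, fderiv_const_mul_field_apply, Finset.mul_sum]

end EuclideanSpace

theorem explicit_solution_singular_heat_general (T : ℝ)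
    (Θ : ℝ → EuclideanSpace ℝ (Fin 3) → ℝ)
    (hΘ : ∀ t x, Θ t x = 2 * Real.sqrt (T - t) / ‖x‖) :
    ∀ t : ℝ, t < T → ∀ x : EuclideanSpace ℝ (Fin 3), x ≠ 0 →
      deriv (fun s => Θ s x) t = -(1 / (Real.sqrt (T - t) * ‖x‖)) ∧
      euclideanLaplacian (fun y => ‖y‖ / (2 * Real.sqrt (T - t))) x
        = 1 / (Real.sqrt (T - t) * ‖x‖) ∧
      deriv (fun s => Θ s x) t + euclideanLaplacian (fun y => 1 / Θ t y) x = 0 := by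
  intro t ht x hx
  have hsqrt : 0 < √(T - t) := Real.sqrt_pos.2 (sub_pos.2 ht)
  have hderiv : deriv (fun s => Θ s x) t = -(1 / (√(T - t) * ‖x‖)) := by
    rw [funext (hΘ · x), (((hasDerivAt_sqrt_const_sub ht).const_mul 2).div_const ‖x‖).deriv]
    field_simp
  have hlap : euclideanLaplacian (fun y => ‖y‖ / (2 * √(T - t))) x = 1 / (√(T - t) * ‖x‖) := by
    rw [euclideanLaplacian_div_const, euclideanLaplacian_norm hx]
    push_cast
    field_simp
    norm_num
  have hinv : (fun y => 1 / Θ t y) = fun y => ‖y‖ / (2 * √(T - t)) :=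
    funext fun y => by rw [hΘ, one_div_div]
  exact ⟨hderiv, hlap, by rw [hinv, hderiv, hlap, neg_add_cancel]⟩

/-- The explicit function `Θ(t,x) = 2√(T−t)/‖x‖` solves the singular heat equation
`∂ₜΘ + Δ(1/Θ) = 0` for `t < T`, `x ≠ 0`, with the stated explicit values of the
time derivative and of the Laplacian of `y ↦ ‖y‖/(2√(T−t)) = 1/Θ(t,y)`. -/
theorem explicit_solution_singular_heat (T : ℝ) (hT : 0 < T)
    (Θ : ℝ → EuclideanSpace ℝ (Fin 3) → ℝ)
    (hΘ : ∀ t x, Θ t x = 2 * Real.sqrt (T - t) / ‖x‖) :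
    ∀ t : ℝ, t < T → ∀ x : EuclideanSpace ℝ (Fin 3), x ≠ 0 →
      deriv (fun s => Θ s x) t = -(1 / (Real.sqrt (T - t) * ‖x‖)) ∧
      euclideanLaplacian (fun y => ‖y‖ / (2 * Real.sqrt (T - t))) x
        = 1 / (Real.sqrt (T - t) * ‖x‖) ∧
      deriv (fun s => Θ s x) t + euclideanLaplacian (fun y => 1 / Θ t y) x = 0 :=
  explicit_solution_singular_heat_general T Θ hΘ
end

section
/- (Generalized Poincaré inequality with logarithmic correction.) Let Ω ⊂ ℝ^d be a nonempty bounded convex open set. Then there exist positive constants C₁ and C₂, depending only on Ω, such that the following holds: for every function v : ℝ^d → ℝ that is differentiable on Ω, satisfies v(x) ≥ 0 for all x ∈ Ω, and is such that v and x ↦ ‖Dv(x)‖ are integrable on Ω, one has ∫_Ω v ≤ |Ω|·exp(C₁·K) + (C₂/|Ω|)·∫_Ω ‖Dv(x)‖ dx, where K := ∫_Ω max(log(v(x)), 0) dx and |Ω| denotes the Lebesgue measure of Ω. -/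
/-!
By Markov's inequality for `(log v)⁺`, the set `A ⊆ Ω` on which
`v ≤ M := exp (2 ⨍_Ω (log v)⁺)` carries at least half of the measure of `Ω`. For `x ∈ Ω`
and `y ∈ A`, integrating `Dv` along the segment from `y` to `x` gives
`v x ≤ M + diam Ω · ∫₀¹ ‖Dv (y + t (x - y))‖ dt`. Averaging over `x ∈ Ω` and `y ∈ A`, the
substitution `x ↦ y + t (x - y)` (for `t ≥ 1/2`), resp. `y ↦ y + t (x - y)` (for `t ≤ 1/2`),
maps `Ω` into itself by convexity with Jacobian at least `2⁻ᵈ`, so the averaged gradient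
term is at most `2ᵈ |Ω| ∫_Ω ‖Dv‖`; dividing by `|A| ≥ |Ω| / 2` gives the inequality.
-/

open MeasureTheory Real Set Module Metric

open scoped ENNReal

theorem enorm_sub_le_lintegral_deriv_of_differentiableAt {F : Type*} [NormedAddCommGroup F]
    [NormedSpace ℝ F] [CompleteSpace F] {φ : ℝ → F} {a b : ℝ} (hab : a ≤ b)
    (hφ : ∀ t ∈ Icc a b, DifferentiableAt ℝ φ t) :
    ‖φ b - φ a‖ₑ ≤ ∫⁻ t in Ioc a b, ‖deriv φ t‖ₑ := by
  rcases eq_top_or_lt_top (∫⁻ t in Ioc a b, ‖deriv φ t‖ₑ) with h | h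
  · simp [h]
  have hint : IntervalIntegrable (deriv φ) volume a b :=
    (intervalIntegrable_iff_integrableOn_Ioc_of_le hab).2
      ⟨(stronglyMeasurable_deriv φ).aestronglyMeasurable, h⟩
  rw [← intervalIntegral.integral_eq_sub_of_hasDerivAt
    (fun t ht => (hφ t (uIcc_of_le hab ▸ ht)).hasDerivAt) hint,
    intervalIntegral.integral_of_le hab]
  exact enorm_integral_le_lintegral_enorm _

theorem enorm_sub_le_mul_lintegral_fderiv {E F : Type*} [NormedAddCommGroup E]
    [NormedSpace ℝ E] [NormedAddCommGroup F] [NormedSpace ℝ F] [CompleteSpace F]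
    {v : E → F} {x y : E}
    (hv : ∀ t ∈ Icc (0 : ℝ) 1, DifferentiableAt ℝ v (y + t • (x - y))) :
    ‖v x - v y‖ₑ ≤ ‖x - y‖ₑ * ∫⁻ t in Ioc (0 : ℝ) 1, ‖fderiv ℝ v (y + t • (x - y))‖ₑ := by
  have hpath : ∀ t, HasDerivAt (fun s : ℝ => y + s • (x - y)) (x - y) t := fun t => by
    simpa using ((hasDerivAt_id t).smul_const (x - y)).const_add y
  have hderiv : ∀ t ∈ Icc (0 : ℝ) 1, HasDerivAt (fun s => v (y + s • (x - y)))
      (fderiv ℝ v (y + t • (x - y)) (x - y)) t := fun t ht =>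
    (hv t ht).hasFDerivAt.comp_hasDerivAt t (hpath t)
  calc ‖v x - v y‖ₑ
      ≤ ∫⁻ t in Ioc (0 : ℝ) 1, ‖deriv (fun s => v (y + s • (x - y))) t‖ₑ := by
        simpa using enorm_sub_le_lintegral_deriv_of_differentiableAt zero_le_one
          fun t ht => (hderiv t ht).differentiableAt
    _ ≤ ∫⁻ t in Ioc (0 : ℝ) 1, ‖fderiv ℝ v (y + t • (x - y))‖ₑ * ‖x - y‖ₑ := by
        refine setLIntegral_mono' measurableSet_Ioc fun t ht => ?_
        rw [(hderiv t (Ioc_subset_Icc_self ht)).deriv]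
        exact ContinuousLinearMap.le_opENorm _ _
    _ = ‖x - y‖ₑ * ∫⁻ t in Ioc (0 : ℝ) 1, ‖fderiv ℝ v (y + t • (x - y))‖ₑ := by
        rw [lintegral_mul_const' _ _ enorm_ne_top, mul_comm]

theorem measure_univ_le_two_mul_measure_le_two_mul_average {α : Type*} [MeasurableSpace α]
    {μ : Measure α} [IsFiniteMeasure μ] {f : α → ℝ} (hf : Integrable f μ) (hf0 : 0 ≤ᵐ[μ] f) :
    μ univ ≤ 2 * μ {x | f x ≤ 2 * ⨍ x, f x ∂μ} := by
  set c := 2 * ⨍ x, f x ∂μ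
  have hmarkov : μ.real {x | c < f x} ≤ μ.real univ / 2 := by
    rcases (integral_nonneg_of_ae hf0).eq_or_lt with h0 | hpos
    · have hzero : f =ᵐ[μ] 0 := (integral_eq_zero_iff_of_nonneg_ae hf0 hf).1 h0.symm
      have hc : c = 0 := by simp [c, average_eq, ← h0]
      have hnull : μ {x | c < f x} = 0 :=
        measure_mono_null (fun x hx => (hc ▸ hx : 0 < f x).ne') (ae_iff.1 hzero)
      rw [measureReal_def, hnull, ENNReal.toReal_zero]
      positivity
    · have hμ : 0 < μ.real univ := by
        refine (measureReal_nonneg).lt_of_ne fun h => hpos.ne' ?_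
        rw [eq_comm, measureReal_eq_zero_iff, Measure.measure_univ_eq_zero] at h
        simp [h]
      have hc : c = 2 * (∫ x, f x ∂μ) / μ.real univ := by
        simp only [c, average_eq, smul_eq_mul]; ring
      have hcpos : 0 < c := by rw [hc]; positivity
      calc μ.real {x | c < f x} ≤ μ.real {x | c ≤ f x} :=
            measureReal_mono fun x (hx : c < f x) => hx.le
        _ ≤ (∫ x, f x ∂μ) / c := by
            rw [le_div_iff₀ hcpos, mul_comm]
            exact mul_meas_ge_le_integral_of_nonneg hf0 hf c
        _ = μ.real univ / 2 := by rw [hc]; field_simp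
  have hsplit : μ.real univ ≤ μ.real {x | f x ≤ c} + μ.real {x | c < f x} := by
    calc μ.real univ = μ.real ({x | f x ≤ c} ∪ {x | c < f x}) := by
          congr; ext x; simp [le_or_gt]
      _ ≤ _ := measureReal_union_le _ _
  rw [← ENNReal.toReal_le_toReal (measure_ne_top _ _) (by finiteness), ENNReal.toReal_mul,
    ENNReal.toReal_ofNat, ← measureReal_def, ← measureReal_def]
  linarith

section Haar

variable {E : Type*} [NormedAddCommGroup E] [NormedSpace ℝ E] [FiniteDimensional ℝ E]
  [MeasurableSpace E] [BorelSpace E] (μ : Measure E) [μ.IsAddHaarMeasure]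

theorem setLIntegral_comp_smul_add_le {g : E → ℝ≥0∞} {c : ℝ} (hc : c ≠ 0) (b : E)
    {s Ω : Set E} (hs : MeasurableSet s) (hΩm : MeasurableSet Ω) (hsΩ : ∀ y ∈ s, c • y + b ∈ Ω) :
    ∫⁻ y in s, g (c • y + b) ∂μ ≤ ENNReal.ofReal |(c ^ finrank ℝ E)⁻¹| * ∫⁻ z in Ω, g z ∂μ := by
  let T : E ≃ᵐ E := (Homeomorph.smulOfNeZero c hc).toMeasurableEquiv
  calc ∫⁻ y in s, g (c • y + b) ∂μ
      ≤ ∫⁻ y, Ω.indicator g (T y + b) ∂μ := by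
        refine (setLIntegral_mono' hs fun y hy => ?_).trans (setLIntegral_le_lintegral _ _)
        exact (indicator_of_mem (hsΩ y hy) g).ge
    _ = ∫⁻ z, Ω.indicator g (z + b) ∂(μ.map T) :=
        (lintegral_map_equiv (fun z => Ω.indicator g (z + b)) T).symm
    _ = ENNReal.ofReal |(c ^ finrank ℝ E)⁻¹| * ∫⁻ z in Ω, g z ∂μ := by
        rw [show ⇑T = (c • ·) from rfl, Measure.map_addHaar_smul μ hc, lintegral_smul_measure,
          lintegral_add_right_eq_self, lintegral_indicator hΩm, smul_eq_mul]

theorem setLIntegral_comp_homothety_le {g : E → ℝ≥0∞} {s Ω : Set E} (hΩ : Convex ℝ Ω)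
    (hs : MeasurableSet s) (hΩm : MeasurableSet Ω) (hsΩ : s ⊆ Ω) {x : E} (hx : x ∈ Ω)
    {t : ℝ} (ht : 1 / 2 ≤ t) (ht1 : t ≤ 1) :
    ∫⁻ y in s, g (x + t • (y - x)) ∂μ ≤ 2 ^ finrank ℝ E * ∫⁻ z in Ω, g z ∂μ := by
  have hmaps : ∀ y ∈ s, t • y + (1 - t) • x ∈ Ω := fun y hy =>
    hΩ (hsΩ hy) hx (by linarith) (by linarith) (by ring)
  have hscale : ENNReal.ofReal |(t ^ finrank ℝ E)⁻¹| ≤ 2 ^ finrank ℝ E := by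
    have ht_inv : t⁻¹ ≤ 2 := by
      rw [inv_le_comm₀ (by linarith) two_pos]; linarith
    rw [← inv_pow, abs_pow, abs_of_pos (by positivity), ← ENNReal.ofReal_ofNat 2,
      ← ENNReal.ofReal_pow zero_le_two]
    gcongr
  calc ∫⁻ y in s, g (x + t • (y - x)) ∂μ = ∫⁻ y in s, g (t • y + (1 - t) • x) ∂μ := by
        congr! 3 with y; module
    _ ≤ ENNReal.ofReal |(t ^ finrank ℝ E)⁻¹| * ∫⁻ z in Ω, g z ∂μ :=
        setLIntegral_comp_smul_add_le μ (by positivity) _ hs hΩm hmaps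
    _ ≤ 2 ^ finrank ℝ E * ∫⁻ z in Ω, g z ∂μ := by gcongr

theorem lintegral_setLIntegral_comp_segment_le {g : E → ℝ≥0∞} (hg : Measurable g)
    {A Ω : Set E} (hΩ : Convex ℝ Ω) (hA : MeasurableSet A) (hΩm : MeasurableSet Ω)
    (hAΩ : A ⊆ Ω) {t : ℝ} (ht0 : 0 ≤ t) (ht1 : t ≤ 1) :
    ∫⁻ x in Ω, ∫⁻ y in A, g (y + t • (x - y)) ∂μ ∂μ
      ≤ 2 ^ finrank ℝ E * μ Ω * ∫⁻ z in Ω, g z ∂μ := by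
  rcases le_total (1 / 2) t with ht | ht
  · rw [lintegral_lintegral_swap (f := fun x y => g (y + t • (x - y))) (hg.comp (by fun_prop :
      Measurable fun p : E × E => p.2 + t • (p.1 - p.2))).aemeasurable]
    calc ∫⁻ y in A, ∫⁻ x in Ω, g (y + t • (x - y)) ∂μ ∂μ
        ≤ ∫⁻ _ in A, 2 ^ finrank ℝ E * ∫⁻ z in Ω, g z ∂μ ∂μ :=
          setLIntegral_mono' hA fun y hy =>
            setLIntegral_comp_homothety_le μ hΩ hΩm hΩm subset_rfl (hAΩ hy) ht ht1
      _ ≤ 2 ^ finrank ℝ E * μ Ω * ∫⁻ z in Ω, g z ∂μ := by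
          rw [setLIntegral_const, mul_right_comm]
          gcongr
  · calc ∫⁻ x in Ω, ∫⁻ y in A, g (y + t • (x - y)) ∂μ ∂μ
        = ∫⁻ x in Ω, ∫⁻ y in A, g (x + (1 - t) • (y - x)) ∂μ ∂μ := by
          congr! 5 with x y; module
      _ ≤ ∫⁻ _ in Ω, 2 ^ finrank ℝ E * ∫⁻ z in Ω, g z ∂μ ∂μ :=
          setLIntegral_mono' hΩm fun x hx =>
            setLIntegral_comp_homothety_le μ hΩ hA hΩm hAΩ hx (by linarith) (by linarith)
      _ = 2 ^ finrank ℝ E * μ Ω * ∫⁻ z in Ω, g z ∂μ := by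
          rw [setLIntegral_const, mul_right_comm]

theorem lintegral_setLIntegral_lintegral_comp_segment_le {g : E → ℝ≥0∞} (hg : Measurable g)
    {A Ω : Set E} (hΩ : Convex ℝ Ω) (hA : MeasurableSet A) (hΩm : MeasurableSet Ω)
    (hAΩ : A ⊆ Ω) :
    ∫⁻ x in Ω, ∫⁻ y in A, (∫⁻ t in Ioc (0 : ℝ) 1, g (y + t • (x - y))) ∂μ ∂μ
      ≤ 2 ^ finrank ℝ E * μ Ω * ∫⁻ z in Ω, g z ∂μ := by
  have hswap_inner : ∀ x, ∫⁻ y in A, (∫⁻ t in Ioc (0 : ℝ) 1, g (y + t • (x - y))) ∂μ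
      = ∫⁻ t in Ioc (0 : ℝ) 1, ∫⁻ y in A, g (y + t • (x - y)) ∂μ := fun x =>
    lintegral_lintegral_swap (f := fun y t => g (y + t • (x - y))) (hg.comp (by fun_prop :
      Measurable fun p : E × ℝ => p.1 + p.2 • (x - p.1))).aemeasurable
  have hmeas : Measurable fun p : E × ℝ => ∫⁻ y in A, g (y + p.2 • (p.1 - y)) ∂μ :=
    (hg.comp (by fun_prop :
      Measurable fun q : (E × ℝ) × E => q.2 + q.1.2 • (q.1.1 - q.2))).lintegral_prod_right'
  rw [lintegral_congr hswap_inner, lintegral_lintegral_swap hmeas.aemeasurable]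
  calc ∫⁻ t in Ioc (0 : ℝ) 1, ∫⁻ x in Ω, ∫⁻ y in A, g (y + t • (x - y)) ∂μ ∂μ
      ≤ ∫⁻ _ in Ioc (0 : ℝ) 1, 2 ^ finrank ℝ E * μ Ω * ∫⁻ z in Ω, g z ∂μ :=
        setLIntegral_mono' measurableSet_Ioc fun t ht =>
          lintegral_setLIntegral_comp_segment_le μ hg hΩ hA hΩm hAΩ ht.1.le ht.2
    _ = 2 ^ finrank ℝ E * μ Ω * ∫⁻ z in Ω, g z ∂μ := by simp

theorem measure_mul_setLIntegral_ofReal_le {v : E → ℝ} {A Ω : Set E} {M : ℝ} (hΩ : Convex ℝ Ω)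
    (hA : MeasurableSet A) (hΩm : MeasurableSet Ω) (hAΩ : A ⊆ Ω)
    (hv : ∀ x ∈ Ω, DifferentiableAt ℝ v x) (hvA : ∀ y ∈ A, v y ≤ M) :
    μ A * ∫⁻ x in Ω, ENNReal.ofReal (v x) ∂μ ≤ μ A * μ Ω * ENNReal.ofReal M
      + ediam Ω * (2 ^ finrank ℝ E * μ Ω * ∫⁻ x in Ω, ‖fderiv ℝ v x‖ₑ ∂μ) := by
  set L : E → E → ℝ≥0∞ := fun x y => ∫⁻ t in Ioc (0 : ℝ) 1, ‖fderiv ℝ v (y + t • (x - y))‖ₑ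
  have hL : Measurable (Function.uncurry L) :=
    ((measurable_fderiv ℝ v).enorm.comp (by fun_prop :
      Measurable fun q : (E × E) × ℝ => q.1.2 + q.2 • (q.1.1 - q.1.2))).lintegral_prod_right'
  have hpointwise : ∀ x ∈ Ω, ∀ y ∈ A,
      ENNReal.ofReal (v x) ≤ ENNReal.ofReal M + ediam Ω * L x y := fun x hx y hy => calc
    ENNReal.ofReal (v x) ≤ ENNReal.ofReal (v y) + ‖v x - v y‖ₑ := by
      rw [enorm_eq_ofReal_abs]
      exact (ENNReal.ofReal_le_ofReal (by linarith [le_abs_self (v x - v y)])).trans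
        ENNReal.ofReal_add_le
    _ ≤ ENNReal.ofReal M + ‖x - y‖ₑ * L x y := by
      gcongr
      · exact hvA y hy
      · exact enorm_sub_le_mul_lintegral_fderiv fun t ht =>
          hv _ (hΩ.add_smul_sub_mem (hAΩ hy) hx ht)
    _ ≤ ENNReal.ofReal M + ediam Ω * L x y := by
      rw [← edist_eq_enorm_sub]
      gcongr
      exact edist_le_ediam_of_mem hx (hAΩ hy)
  calc μ A * ∫⁻ x in Ω, ENNReal.ofReal (v x) ∂μ
      ≤ ∫⁻ x in Ω, ∫⁻ _ in A, ENNReal.ofReal (v x) ∂μ ∂μ := by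
        simp_rw [setLIntegral_const, mul_comm _ (μ A)]
        exact lintegral_const_mul_le _ _
    _ ≤ ∫⁻ x in Ω, ∫⁻ y in A, (ENNReal.ofReal M + ediam Ω * L x y) ∂μ ∂μ :=
        setLIntegral_mono' hΩm fun x hx => setLIntegral_mono' hA fun y hy => hpointwise x hx y hy
    _ = μ A * μ Ω * ENNReal.ofReal M + ediam Ω * ∫⁻ x in Ω, ∫⁻ y in A, L x y ∂μ ∂μ := by
        have hinner : ∀ x, ∫⁻ y in A, (ENNReal.ofReal M + ediam Ω * L x y) ∂μ
            = ENNReal.ofReal M * μ A + ediam Ω * ∫⁻ y in A, L x y ∂μ := fun x => by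
          rw [lintegral_add_left measurable_const, setLIntegral_const,
            lintegral_const_mul _ hL.of_uncurry_left]
        rw [lintegral_congr hinner, lintegral_add_left measurable_const, setLIntegral_const,
          lintegral_const_mul _ (show Measurable fun x => ∫⁻ y in A, L x y ∂μ from
            hL.lintegral_prod_right')]
        ring
    _ ≤ μ A * μ Ω * ENNReal.ofReal M
          + ediam Ω * (2 ^ finrank ℝ E * μ Ω * ∫⁻ x in Ω, ‖fderiv ℝ v x‖ₑ ∂μ) := by
        gcongr
        exact lintegral_setLIntegral_lintegral_comp_segment_le μ (measurable_fderiv ℝ v).enorm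
          hΩ hA hΩm hAΩ

theorem setLIntegral_ofReal_le_exp_average_add {v : E → ℝ} {Ω : Set E} (hΩo : IsOpen Ω)
    (hΩ : Convex ℝ Ω) (hμΩ : μ Ω ≠ ∞) (hv : ∀ x ∈ Ω, DifferentiableAt ℝ v x)
    (hlog : IntegrableOn (fun x => max (log (v x)) 0) Ω μ) :
    ∫⁻ x in Ω, ENNReal.ofReal (v x) ∂μ
      ≤ μ Ω * ENNReal.ofReal (exp (2 * ⨍ x in Ω, max (log (v x)) 0 ∂μ))
        + 2 ^ (finrank ℝ E + 1) * ediam Ω * ∫⁻ x in Ω, ‖fderiv ℝ v x‖ₑ ∂μ := by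
  set M := exp (2 * ⨍ x in Ω, max (log (v x)) 0 ∂μ)
  set A := Ω \ v ⁻¹' Ioi M
  have hΩm : MeasurableSet Ω := hΩo.measurableSet
  have hA : MeasurableSet A := by
    have hopen : IsOpen (Ω ∩ v ⁻¹' Ioi M) := ContinuousOn.isOpen_inter_preimage
      (fun x hx => (hv x hx).continuousAt.continuousWithinAt) hΩo isOpen_Ioi
    simpa [A, sdiff_inter_self_eq_sdiff] using hΩm.diff hopen.measurableSet
  have hvA : ∀ y ∈ A, v y ≤ M := fun y hy => not_lt.1 hy.2
  have hhalf : μ Ω ≤ 2 * μ A := by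
    have : IsFiniteMeasure (μ.restrict Ω) := isFiniteMeasure_restrict.2 hμΩ
    have h := measure_univ_le_two_mul_measure_le_two_mul_average hlog
      (ae_of_all _ fun x => le_max_right _ _)
    rw [Measure.restrict_apply_univ, Measure.restrict_apply' hΩm] at h
    refine h.trans (mul_le_mul_right (measure_mono ?_) 2)
    rintro x ⟨hx, hxΩ⟩
    refine ⟨hxΩ, not_lt.2 (?_ : v x ≤ M)⟩
    rcases le_or_gt (v x) 0 with hneg | hpos
    · exact hneg.trans (exp_pos _).le
    · exact (log_le_iff_le_exp hpos).1 ((le_max_left _ _).trans hx)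
  rcases eq_or_ne (μ A) 0 with hA0 | hA0
  · have hΩ0 : μ Ω = 0 := by simpa [hA0] using hhalf
    simp [Measure.restrict_eq_zero.2 hΩ0]
  have hAtop : μ A ≠ ∞ := ne_top_of_le_ne_top hμΩ (measure_mono sdiff_subset)
  refine (ENNReal.mul_le_mul_iff_right hA0 hAtop).1 ?_
  calc μ A * ∫⁻ x in Ω, ENNReal.ofReal (v x) ∂μ
      ≤ μ A * μ Ω * ENNReal.ofReal M
        + ediam Ω * (2 ^ finrank ℝ E * μ Ω * ∫⁻ x in Ω, ‖fderiv ℝ v x‖ₑ ∂μ) :=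
        measure_mul_setLIntegral_ofReal_le μ hΩ hA hΩm sdiff_subset hv hvA
    _ ≤ μ A * μ Ω * ENNReal.ofReal M
        + ediam Ω * (2 ^ finrank ℝ E * (2 * μ A) * ∫⁻ x in Ω, ‖fderiv ℝ v x‖ₑ ∂μ) := by
        gcongr
    _ = μ A * (μ Ω * ENNReal.ofReal M
        + 2 ^ (finrank ℝ E + 1) * ediam Ω * ∫⁻ x in Ω, ‖fderiv ℝ v x‖ₑ ∂μ) := by
        ring

theorem setIntegral_le_exp_average_add {v : E → ℝ} {Ω : Set E} (hΩo : IsOpen Ω)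
    (hΩ : Convex ℝ Ω) (hbd : Bornology.IsBounded Ω) (hv : ∀ x ∈ Ω, DifferentiableAt ℝ v x)
    (hv0 : ∀ x ∈ Ω, 0 ≤ v x) (hvi : IntegrableOn v Ω μ)
    (hDv : IntegrableOn (fun x => ‖fderiv ℝ v x‖) Ω μ) :
    ∫ x in Ω, v x ∂μ ≤ μ.real Ω * exp (2 * ⨍ x in Ω, max (log (v x)) 0 ∂μ)
      + 2 ^ (finrank ℝ E + 1) * diam Ω * ∫ x in Ω, ‖fderiv ℝ v x‖ ∂μ := by
  have hlog : IntegrableOn (fun x => max (log (v x)) 0) Ω μ := by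
    have hmeas : AEMeasurable (fun x => max (log (v x)) 0) (μ.restrict Ω) :=
      (measurable_log.comp_aemeasurable hvi.aemeasurable).max aemeasurable_const
    refine hvi.norm.mono' hmeas.aestronglyMeasurable (ae_of_all _ fun x => ?_)
    rw [norm_of_nonneg (le_max_right _ _), norm_eq_abs, ← log_abs]
    exact max_le (log_le_self (abs_nonneg _)) (abs_nonneg _)
  have hμΩ : μ Ω ≠ ∞ := hbd.measure_lt_top.ne
  have hG : ∫⁻ x in Ω, ‖fderiv ℝ v x‖ₑ ∂μ ≠ ∞ := by
    simpa only [enorm_norm] using hDv.2.ne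
  calc ∫ x in Ω, v x ∂μ = (∫⁻ x in Ω, ENNReal.ofReal (v x) ∂μ).toReal :=
        integral_eq_lintegral_of_nonneg_ae (ae_restrict_of_forall_mem hΩo.measurableSet hv0)
          hvi.aestronglyMeasurable
    _ ≤ (μ Ω * ENNReal.ofReal (exp (2 * ⨍ x in Ω, max (log (v x)) 0 ∂μ))
          + 2 ^ (finrank ℝ E + 1) * ediam Ω * ∫⁻ x in Ω, ‖fderiv ℝ v x‖ₑ ∂μ).toReal :=
        ENNReal.toReal_mono (by finiteness [hbd.ediam_ne_top])
          (setLIntegral_ofReal_le_exp_average_add μ hΩo hΩ hμΩ hv hlog)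
    _ = μ.real Ω * exp (2 * ⨍ x in Ω, max (log (v x)) 0 ∂μ)
          + 2 ^ (finrank ℝ E + 1) * diam Ω * ∫ x in Ω, ‖fderiv ℝ v x‖ ∂μ := by
        rw [ENNReal.toReal_add (by finiteness) (by finiteness [hbd.ediam_ne_top]),
          integral_norm_eq_lintegral_enorm (measurable_fderiv ℝ v).aestronglyMeasurable]
        simp [diam, measureReal_def, (exp_pos _).le]

end Haar

/-- Generalized Poincaré inequality with logarithmic correction: on a nonempty bounded
convex open set `Ω ⊆ ℝ^d`, there are constants `C₁, C₂ > 0` (depending only on `Ω`) such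
that every nonnegative differentiable `v` with `v` and `‖Dv‖` integrable on `Ω` satisfies
`∫_Ω v ≤ |Ω|·exp(C₁·∫_Ω (log v)⁺) + (C₂/|Ω|)·∫_Ω ‖Dv‖`. -/
theorem log_poincare (d : ℕ) (Ω : Set (EuclideanSpace ℝ (Fin d)))
    (hne : Ω.Nonempty) (hbd : Bornology.IsBounded Ω) (hconv : Convex ℝ Ω)
    (hopen : IsOpen Ω) :
    ∃ C₁ C₂ : ℝ, 0 < C₁ ∧ 0 < C₂ ∧
      ∀ v : EuclideanSpace ℝ (Fin d) → ℝ,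
        (∀ x ∈ Ω, DifferentiableAt ℝ v x) →
        (∀ x ∈ Ω, 0 ≤ v x) →
        IntegrableOn v Ω volume →
        IntegrableOn (fun x => ‖fderiv ℝ v x‖) Ω volume →
        ∫ x in Ω, v x ≤
          (volume Ω).toReal * Real.exp (C₁ * ∫ x in Ω, max (Real.log (v x)) 0)
            + (C₂ / (volume Ω).toReal) * ∫ x in Ω, ‖fderiv ℝ v x‖ := by
  have hm : 0 < volume.real Ω :=
    ENNReal.toReal_pos (hopen.measure_pos volume hne).ne' hbd.measure_lt_top.ne
  refine ⟨2 / volume.real Ω, 2 ^ (d + 1) * (diam Ω + 1) * volume.real Ω, by positivity,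
    by positivity, fun v hv hv0 hvi hDv => ?_⟩
  have h := setIntegral_le_exp_average_add volume hopen hconv hbd hv hv0 hvi hDv
  rw [finrank_euclideanSpace_fin, setAverage_eq, smul_eq_mul, ← mul_assoc, ← div_eq_mul_inv] at h
  rw [← measureReal_def, mul_div_cancel_right₀ _ hm.ne']
  refine h.trans ?_
  gcongr
  linarith
end

section
/- (Boundedness of the Moser-type recursion.) Let H > 1 and A, B ≥ 0 be real numbers. For i ≥ 0 set η_i := (H^{i} + 2)/H^{i} = 1 + 2·H^{−i}. Let (L_i)_{i≥0} and (ζ_i)_{i≥0} be sequences of real numbers such that |ζ_i| ≤ A + B·(i+1) for every i ≥ 0 and L_{i+1} ≤ H^{−(i+1)}·ζ_i + η_{i+1}·L_i for every i ≥ 0. Then the sequence (L_i) is bounded above: there exists a real constant C (depending only on H, A, B and L_0) such that L_i ≤ C for all i ≥ 0. -/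
/-- Boundedness of the Moser-type recursion: if `H > 1`, `A, B ≥ 0`,
`η_i = (H^i + 2)/H^i`, `|ζ_i| ≤ A + B·(i+1)` and
`L_{i+1} ≤ H^{−(i+1)}·ζ_i + η_{i+1}·L_i` for all `i`, then the sequence `(L_i)`
is bounded above. -/
theorem moser_recursion_bounded (H A B : ℝ) (hH : 1 < H) (hA : 0 ≤ A) (hB : 0 ≤ B)
    (η : ℕ → ℝ) (hη : ∀ i : ℕ, η i = (H ^ i + 2) / H ^ i)
    (L ζ : ℕ → ℝ) (hζ : ∀ i : ℕ, |ζ i| ≤ A + B * (i + 1))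
    (hrec : ∀ i : ℕ, L (i + 1) ≤ H ^ (-(i + 1 : ℤ)) * ζ i + η (i + 1) * L i) :
    ∃ C : ℝ, ∀ i : ℕ, L i ≤ C := by
  have hH0 : (0:ℝ) < H := lt_trans one_pos hH
  set r : ℝ := H⁻¹ with hrdef
  have hr0 : 0 < r := inv_pos.mpr hH0
  have hr1 : r < 1 := inv_lt_one_of_one_lt₀ hH
  -- η in terms of r
  have hηr : ∀ k : ℕ, η k = 1 + 2 * r ^ k := by
    intro k
    have hk : (H:ℝ) ^ k ≠ 0 := pow_ne_zero _ (ne_of_gt hH0)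
    rw [hη, hrdef, inv_pow]
    field_simp
  have hη1 : ∀ k : ℕ, 1 ≤ η k := by
    intro k
    rw [hηr]
    nlinarith [pow_pos hr0 k]
  -- zpow to pow
  have hz : ∀ i : ℕ, H ^ (-(i + 1 : ℤ)) = r ^ (i + 1) := by
    intro i
    rw [zpow_neg, hrdef, inv_pow]
    norm_cast
  set Q : ℕ → ℝ := fun i => ∏ k ∈ Finset.range i, η (k + 1) with hQ
  set c : ℕ → ℝ := fun k => r ^ k * (A + B * k) with hc
  have hc0 : ∀ k, 0 ≤ c k := by
    intro k
    apply mul_nonneg (le_of_lt (pow_pos hr0 k))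
    positivity
  have hQ1 : ∀ i, 1 ≤ Q i := by
    intro i
    simp only [hQ]
    calc (1:ℝ) = ∏ _k ∈ Finset.range i, 1 := by simp
      _ ≤ ∏ k ∈ Finset.range i, η (k + 1) :=
        Finset.prod_le_prod (fun k _ => zero_le_one) (fun k _ => hη1 (k + 1))
  -- product bound
  have hgeo : ∀ i : ℕ, ∑ k ∈ Finset.range i, r ^ k ≤ (1 - r)⁻¹ := by
    intro i
    apply Summable.sum_le_tsum (Finset.range i) (fun k _ => le_of_lt (pow_pos hr0 k))
      (summable_geometric_of_lt_one (le_of_lt hr0) hr1)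
      |>.trans_eq (tsum_geometric_of_lt_one (le_of_lt hr0) hr1)
  have hQbound : ∀ i, Q i ≤ Real.exp (2 / (H - 1)) := by
    intro i
    have h1 : Q i ≤ ∏ k ∈ Finset.range i, Real.exp (2 * r ^ (k + 1)) := by
      apply Finset.prod_le_prod
      · intro k _; linarith [hη1 (k + 1)]
      · intro k _
        rw [hηr]
        have := Real.add_one_le_exp (2 * r ^ (k + 1))
        linarith
    rw [← Real.exp_sum] at h1
    refine h1.trans (Real.exp_le_exp.mpr ?_)
    have : ∑ k ∈ Finset.range i, 2 * r ^ (k + 1)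
        = 2 * r * ∑ k ∈ Finset.range i, r ^ k := by
      rw [Finset.mul_sum]
      apply Finset.sum_congr rfl
      intro k _; ring
    rw [this]
    have h2 : 2 * r * ∑ k ∈ Finset.range i, r ^ k ≤ 2 * r * (1 - r)⁻¹ := by
      apply mul_le_mul_of_nonneg_left (hgeo i) (by linarith)
    refine h2.trans (le_of_eq ?_)
    rw [hrdef]
    field_simp
  -- sum bound
  have hsummable : Summable (fun n : ℕ => (n : ℝ) * r ^ n) := by
    have := summable_pow_mul_geometric_of_norm_lt_one (R := ℝ) 1
      (r := r) (by rw [Real.norm_eq_abs, abs_of_pos hr0]; exact hr1)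
    simpa using this
  set S : ℝ := (A + B) * ∑' n : ℕ, (n : ℝ) * r ^ n with hS
  have htsum0 : 0 ≤ ∑' n : ℕ, (n : ℝ) * r ^ n :=
    tsum_nonneg fun n => mul_nonneg (Nat.cast_nonneg n) (le_of_lt (pow_pos hr0 n))
  have hSbound : ∀ i, ∑ k ∈ Finset.range i, c (k + 1) ≤ S := by
    intro i
    have h1 : ∑ k ∈ Finset.range i, c (k + 1)
        ≤ ∑ k ∈ Finset.range i, (A + B) * ((↑(k + 1) : ℝ) * r ^ (k + 1)) := by
      apply Finset.sum_le_sum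
      intro k _
      rw [hc]
      have hk1 : (1:ℝ) ≤ (↑(k+1) : ℝ) := by exact_mod_cast Nat.one_le_iff_ne_zero.mpr (Nat.succ_ne_zero k)
      have hrk : (0:ℝ) < r ^ (k + 1) := pow_pos hr0 _
      have : A + B * (↑(k+1):ℝ) ≤ (A + B) * (↑(k+1):ℝ) := by nlinarith
      calc r ^ (k+1) * (A + B * (↑(k+1):ℝ)) ≤ r ^ (k+1) * ((A + B) * (↑(k+1):ℝ)) := by
            apply mul_le_mul_of_nonneg_left this (le_of_lt hrk)
        _ = (A + B) * ((↑(k+1):ℝ) * r ^ (k+1)) := by ring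
    refine h1.trans ?_
    rw [← Finset.mul_sum, hS]
    apply mul_le_mul_of_nonneg_left _ (by linarith)
    calc ∑ k ∈ Finset.range i, (↑(k+1):ℝ) * r ^ (k+1)
        = ∑ k ∈ Finset.Ico 1 (i+1), (k:ℝ) * r ^ k := by
          rw [Finset.sum_Ico_eq_sum_range]
          simp [add_comm]
      _ ≤ ∑ k ∈ Finset.range (i+1), (k:ℝ) * r ^ k := by
          apply Finset.sum_le_sum_of_subset_of_nonneg
          · intro x hx
            simp only [Finset.mem_Ico] at hx
            exact Finset.mem_range.mpr hx.2
          · intro k _ _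
            exact mul_nonneg (Nat.cast_nonneg k) (le_of_lt (pow_pos hr0 k))
      _ ≤ ∑' n : ℕ, (n : ℝ) * r ^ n := by
          apply Summable.sum_le_tsum _ (fun k _ => mul_nonneg (Nat.cast_nonneg k)
            (le_of_lt (pow_pos hr0 k))) hsummable
  set M : ℝ := max (L 0) 0 with hM
  have hM0 : 0 ≤ M := le_max_right _ _
  -- main induction
  have key : ∀ i, L i ≤ Q i * (M + ∑ k ∈ Finset.range i, c (k + 1)) := by
    intro i
    induction i with
    | zero => simp [hQ, hM]
    | succ i ih =>
      have hQi := hQ1 i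
      have hSi : 0 ≤ ∑ k ∈ Finset.range i, c (k + 1) :=
        Finset.sum_nonneg fun k _ => hc0 _
      have hstep := hrec i
      have hz1 : H ^ (-(i + 1 : ℤ)) * ζ i ≤ c (i + 1) := by
        rw [hz, hc]
        have hζi : ζ i ≤ A + B * (i + 1) := (le_abs_self _).trans (hζ i)
        have : (A : ℝ) + B * ((i:ℝ) + 1) = A + B * (↑(i+1):ℝ) := by push_cast; ring
        apply mul_le_mul_of_nonneg_left _ (le_of_lt (pow_pos hr0 (i+1)))
        rw [← this]; exact hζi
      have hQsucc : Q (i + 1) = η (i + 1) * Q i := by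
        simp only [hQ, Finset.prod_range_succ]; ring
      have hSsucc : ∑ k ∈ Finset.range (i+1), c (k + 1)
          = (∑ k ∈ Finset.range i, c (k + 1)) + c (i + 1) :=
        Finset.sum_range_succ _ _
      have hη2 : 1 ≤ η (i + 1) := hη1 _
      have h3 : η (i + 1) * L i ≤ η (i + 1) * (Q i * (M + ∑ k ∈ Finset.range i, c (k + 1))) :=
        mul_le_mul_of_nonneg_left ih (by linarith)
      have h4 : (1:ℝ) ≤ η (i+1) * Q i := one_le_mul_of_one_le_of_one_le hη2 hQi
      calc L (i + 1) ≤ H ^ (-(i + 1 : ℤ)) * ζ i + η (i + 1) * L i := hstep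
        _ ≤ c (i + 1) + η (i + 1) * (Q i * (M + ∑ k ∈ Finset.range i, c (k + 1))) := by
            linarith
        _ ≤ Q (i + 1) * (M + ∑ k ∈ Finset.range (i+1), c (k + 1)) := by
            rw [hQsucc, hSsucc]
            nlinarith [hc0 (i+1)]
  refine ⟨Real.exp (2 / (H - 1)) * (M + S), fun i => ?_⟩
  refine (key i).trans ?_
  have hSi : 0 ≤ ∑ k ∈ Finset.range i, c (k + 1) :=
    Finset.sum_nonneg fun k _ => hc0 _
  apply mul_le_mul (hQbound i) (by linarith [hSbound i]) (by linarith) (le_of_lt (Real.exp_pos _))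
end
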